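/- arXiv:2406.17210 — 3 statements merged into one kernel-verified Lean document; each statement's English description precedes it below -/
import Mathlib

section
/- Suppose a random partition of a finite metric space (V,d) into clusters satisfies: (a) any two points in the same cluster are at distance at most R, (b) for all u,v, the probability they lie in different clusters is at most β·d(u,v), and (c) points at distance less than ε are always in the same cluster. If S is formed by independently including each cluster with probability 1/2, then the resulting random cut S satisfies: P(cut_{u,v}) ≤ β·d(u,v) for all u,v; P(cut_{u,v}) = 0 whenever d(u,v) < ε; and P(cut_{u,v}) ≥ 1/2 whenever d(u,v) > R, where cut_{u,v} is the event that exactly one of u,v is in S. -/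
open MeasureTheory

/-- If a random partition `C` of a finite metric space has weak diameter at most `R`,
separates points with probability at most `β·d(u,v)`, and never separates points at
distance `< ε`, and `S` is formed by including each cluster independently with
probability 1/2 (labels `x : ι → Bool`, independent of the partition, so that
`u ∈ S ↔ x (C u) = true`), then `S` is a `(β, R, ε)`-distance preserving cut:
`P(cut_{u,v}) ≤ β·d(u,v)`, `P(cut_{u,v}) = 0` when `d(u,v) < ε`, and
`P(cut_{u,v}) ≥ 1/2` when `d(u,v) > R`. -/
theorem cluster_to_cut
    (V : Type*) [MetricSpace V] [Fintype V]
    (ι : Type*) [Fintype ι] [MeasurableSpace ι] [MeasurableSingletonClass ι]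
    (Ω₁ : Type*) [MeasurableSpace Ω₁] (μ₁ : Measure Ω₁) [IsProbabilityMeasure μ₁]
    (C : Ω₁ → V → ι) (hCmeas : ∀ v, Measurable fun ω => C ω v)
    (R β ε : ℝ) (hR : 0 < R) (hβ : 0 < β) (hε : 0 < ε)
    -- (a) weak diameter bound
    (hdiam : ∀ ω u v, C ω u = C ω v → dist u v ≤ R)
    -- (b) separation probability bound
    (hsep : ∀ u v : V, μ₁ {ω | C ω u ≠ C ω v} ≤ ENNReal.ofReal (β * dist u v))
    -- (c) close points always together
    (hclose : ∀ ω u v, dist u v < ε → C ω u = C ω v)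
    -- independent Bernoulli(1/2) labels for the clusters (independent of the
    -- partition since we take the product measure)
    (ν : Measure (ι → Bool)) [IsProbabilityMeasure ν]
    (hhalf : ∀ c : ι, ν {x | x c = true} = 1/2)
    (hpair : ∀ c c' : ι, c ≠ c' → ν {x | x c ≠ x c'} = 1/2) :
    ∀ u v : V,
      ((μ₁.prod ν) {p | p.2 (C p.1 u) ≠ p.2 (C p.1 v)} ≤ ENNReal.ofReal (β * dist u v)) ∧
      (dist u v < ε → (μ₁.prod ν) {p | p.2 (C p.1 u) ≠ p.2 (C p.1 v)} = 0) ∧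
      (dist u v > R → (μ₁.prod ν) {p | p.2 (C p.1 u) ≠ p.2 (C p.1 v)} ≥ 1/2) := by
  intro u v
  have hcc : MeasurableSet {ω : Ω₁ | C ω u ≠ C ω v} := by
    have : {ω : Ω₁ | C ω u ≠ C ω v}
        = (fun ω => (C ω u, C ω v)) ⁻¹' {q : ι × ι | q.1 ≠ q.2} := rfl
    rw [this]
    exact ((hCmeas u).prodMk (hCmeas v)) (Set.Countable.measurableSet (Set.to_countable _))
  have hmeas : MeasurableSet {p : Ω₁ × (ι → Bool) | p.2 (C p.1 u) ≠ p.2 (C p.1 v)} := by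
    have hset : {p : Ω₁ × (ι → Bool) | p.2 (C p.1 u) ≠ p.2 (C p.1 v)}
        = ⋃ c : ι, ⋃ c' : ι,
            (({p : Ω₁ × (ι → Bool) | C p.1 u = c} ∩ {p | C p.1 v = c'})
              ∩ {p | p.2 c ≠ p.2 c'}) := by
      ext p
      simp only [Set.mem_setOf_eq, Set.mem_iUnion, Set.mem_inter_iff]
      constructor
      · intro h; exact ⟨C p.1 u, C p.1 v, ⟨rfl, rfl⟩, h⟩
      · rintro ⟨c, c', ⟨rfl, rfl⟩, h⟩; exact h
    rw [hset]
    refine MeasurableSet.iUnion fun c => MeasurableSet.iUnion fun c' => ?_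
    refine MeasurableSet.inter (MeasurableSet.inter ?_ ?_) ?_
    · exact ((hCmeas u).comp measurable_fst) (measurableSet_singleton c)
    · exact ((hCmeas v).comp measurable_fst) (measurableSet_singleton c')
    · have : {p : Ω₁ × (ι → Bool) | p.2 c ≠ p.2 c'}
          = (fun p : Ω₁ × (ι → Bool) => (p.2 c, p.2 c')) ⁻¹' {q : Bool × Bool | q.1 ≠ q.2} := rfl
      rw [this]
      exact (((measurable_pi_apply c).comp measurable_snd).prodMk
        ((measurable_pi_apply c').comp measurable_snd))
        (Set.Countable.measurableSet (Set.to_countable _))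
  have hprod : (μ₁.prod ν) {p : Ω₁ × (ι → Bool) | p.2 (C p.1 u) ≠ p.2 (C p.1 v)}
      = ∫⁻ ω, ν {x : ι → Bool | x (C ω u) ≠ x (C ω v)} ∂μ₁ := by
    rw [Measure.prod_apply hmeas]; rfl
  refine ⟨?_, ?_, ?_⟩
  · -- upper bound
    calc (μ₁.prod ν) {p : Ω₁ × (ι → Bool) | p.2 (C p.1 u) ≠ p.2 (C p.1 v)}
        = ∫⁻ ω, ν {x : ι → Bool | x (C ω u) ≠ x (C ω v)} ∂μ₁ := hprod
      _ ≤ ∫⁻ ω, ({ω : Ω₁ | C ω u ≠ C ω v}).indicator (fun _ => 1) ω ∂μ₁ := by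
          refine lintegral_mono fun ω => ?_
          by_cases h : C ω u = C ω v
          · have : {x : ι → Bool | x (C ω u) ≠ x (C ω v)} = ∅ := by
              ext x; simp [h]
            simp [this, Set.indicator_apply]
          · have hm : ω ∈ {ω : Ω₁ | C ω u ≠ C ω v} := h
            rw [Set.indicator_of_mem hm]
            exact le_trans (measure_mono (Set.subset_univ _)) (by simp)
      _ = μ₁ {ω : Ω₁ | C ω u ≠ C ω v} := by
          rw [lintegral_indicator hcc]; simp
      _ ≤ ENNReal.ofReal (β * dist u v) := hsep u v
  · -- zero when close
    intro hlt
    rw [hprod]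
    have : ∀ ω, ν {x : ι → Bool | x (C ω u) ≠ x (C ω v)} = 0 := by
      intro ω
      have h := hclose ω u v hlt
      have : {x : ι → Bool | x (C ω u) ≠ x (C ω v)} = ∅ := by ext x; simp [h]
      simp [this]
    simp [this]
  · -- at least 1/2 when far
    intro hgt
    rw [hprod]
    have : ∀ ω, ν {x : ι → Bool | x (C ω u) ≠ x (C ω v)} = 1/2 := by
      intro ω
      refine hpair _ _ fun h => ?_
      exact absurd (hdiam ω u v h) (not_le.mpr hgt)
    calc (1 : ENNReal)/2 = ∫⁻ _, 1/2 ∂μ₁ := by simp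
      _ ≤ ∫⁻ ω, ν {x : ι → Bool | x (C ω u) ≠ x (C ω v)} ∂μ₁ :=
          lintegral_mono fun ω => (this ω).ge
end

section
/- Let S₁,…,S_r be random subsets of a finite metric space (V,d) with parameters R_i = 2^{i-2}, such that for all u,v with d(u,v) > R_i we have P(cut_{u,v}(S_i)) ≥ 1/2. Let ρ be the characteristic embedding. Then for every u ≠ v with 1 ≤ d(u,v) ≤ 2^{r-2}, E[max_i |ρ(u)_i − ρ(v)_i|] ≥ d(u,v)/4. -/
open MeasureTheory
open scoped Classical

/-! Choose the scale `i` with `R_i < d(u,v) ≤ 2 R_i`. With probability at least `1/2` the set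
`S_i` separates `u` and `v`, and then the `i`-th coordinate alone makes the `ℓ∞` distance of the
embedded points at least `R_i`; so its expectation is at least `R_i / 2 ≥ d(u,v) / 4`. -/

section

variable {V Ω : Type*}

noncomputable def charEmbedding (T : ℕ → Set V) (v : V) (i : ℕ) : ℝ :=
  if v ∈ T i then 2 ^ ((i : ℤ) - 2) else 0

noncomputable def charEmbeddingDist (s : Finset ℕ) (hs : s.Nonempty) (T : ℕ → Set V) (u v : V) :
    ℝ :=
  s.sup' hs fun i => |charEmbedding T u i - charEmbedding T v i|

section deterministic

variable {T : ℕ → Set V} {u v : V} {i : ℕ}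

lemma abs_charEmbedding_sub_le :
    |charEmbedding T u i - charEmbedding T v i| ≤ 2 ^ ((i : ℤ) - 2) := by
  have : (0 : ℝ) ≤ 2 ^ ((i : ℤ) - 2) := by positivity
  unfold charEmbedding
  split_ifs <;> simp [abs_of_nonneg, this]

lemma abs_charEmbedding_sub_of_not_iff (h : ¬(u ∈ T i ↔ v ∈ T i)) :
    |charEmbedding T u i - charEmbedding T v i| = 2 ^ ((i : ℤ) - 2) := by
  have : (0 : ℝ) ≤ 2 ^ ((i : ℤ) - 2) := by positivity
  unfold charEmbedding
  split_ifs <;> simp_all [abs_of_nonneg]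

variable {s : Finset ℕ} {hs : s.Nonempty}

lemma le_charEmbeddingDist (hi : i ∈ s) :
    |charEmbedding T u i - charEmbedding T v i| ≤ charEmbeddingDist s hs T u v :=
  Finset.le_sup' (fun i => |charEmbedding T u i - charEmbedding T v i|) hi

lemma charEmbeddingDist_nonneg : 0 ≤ charEmbeddingDist s hs T u v :=
  have ⟨_, hi⟩ := hs
  (abs_nonneg _).trans (le_charEmbeddingDist hi)

lemma zpow_le_charEmbeddingDist_of_not_iff (hi : i ∈ s) (h : ¬(u ∈ T i ↔ v ∈ T i)) :
    2 ^ ((i : ℤ) - 2) ≤ charEmbeddingDist s hs T u v :=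
  (abs_charEmbedding_sub_of_not_iff h).symm.le.trans (le_charEmbeddingDist hi)

lemma charEmbeddingDist_le :
    charEmbeddingDist s hs T u v ≤ s.sup' hs fun i => 2 ^ ((i : ℤ) - 2) :=
  Finset.sup'_mono_fun fun _ _ => abs_charEmbedding_sub_le

end deterministic

section random

variable [MeasurableSpace Ω] {S : ℕ → Ω → Set V}

lemma measurable_charEmbedding {v : V} {i : ℕ} (h : MeasurableSet {ω | v ∈ S i ω}) :
    Measurable fun ω => charEmbedding (S · ω) v i := by
  unfold charEmbedding
  exact Measurable.ite h measurable_const measurable_const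

lemma integrable_charEmbeddingDist (μ : Measure Ω) [IsFiniteMeasure μ]
    (hmeas : ∀ i (v : V), MeasurableSet {ω | v ∈ S i ω}) {s : Finset ℕ} (hs : s.Nonempty) (u v : V) :
    Integrable (fun ω => charEmbeddingDist s hs (S · ω) u v) μ := by
  have hf : Measurable fun ω => charEmbeddingDist s hs (S · ω) u v := by
    have := Finset.measurable_sup' (α := ℝ) hs
      (f := fun i ω => |charEmbedding (S · ω) u i - charEmbedding (S · ω) v i|) fun i _ =>
      ((measurable_charEmbedding (hmeas i u)).sub (measurable_charEmbedding (hmeas i v))).abs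
    convert this using 1
    ext ω
    rw [Finset.sup'_apply]
    rfl
  refine .of_bound hf.aestronglyMeasurable (s.sup' hs fun i => (2 : ℝ) ^ ((i : ℤ) - 2))
    (.of_forall fun ω => ?_)
  rw [Real.norm_of_nonneg charEmbeddingDist_nonneg]
  exact charEmbeddingDist_le

lemma mul_measureReal_le_integral_of_le {μ : Measure Ω} [IsFiniteMeasure μ] {f : Ω → ℝ}
    {E : Set Ω} {c : ℝ} (hc : 0 ≤ c) (hf : 0 ≤ f) (hfi : Integrable f μ) (hE : ∀ ω ∈ E, c ≤ f ω) :
    c * μ.real E ≤ ∫ ω, f ω ∂μ :=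
  calc c * μ.real E ≤ c * μ.real {ω | c ≤ f ω} :=
        mul_le_mul_of_nonneg_left (measureReal_mono hE) hc
    _ ≤ ∫ ω, f ω ∂μ := mul_meas_ge_le_integral_of_nonneg (.of_forall hf) hfi c

end random

lemma exists_mem_Icc_zpow_lt_le {d : ℝ} {r : ℕ} (h1 : 1 ≤ d) (h2 : d ≤ 2 ^ ((r : ℤ) - 2)) :
    ∃ i ∈ Finset.Icc 1 r, (2 : ℝ) ^ ((i : ℤ) - 2) < d ∧ d ≤ 2 * 2 ^ ((i : ℤ) - 2) := by
  have hlt := Int.zpow_pred_clog_lt_self (R := ℝ) one_lt_two (zero_lt_one.trans_le h1)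
  have hle := Int.self_le_zpow_clog (R := ℝ) one_lt_two d
  push_cast at hlt hle
  set k := Int.clog 2 d
  have hk0 : 0 ≤ k := by
    by_contra! hk
    linarith [zpow_lt_one_of_neg₀ (one_lt_two : (1 : ℝ) < 2) hk]
  have hkr : k - 1 < (r : ℤ) - 2 := (zpow_lt_zpow_iff_right₀ one_lt_two).mp (hlt.trans_le h2)
  lift k to ℕ using hk0 with n
  refine ⟨n + 1, Finset.mem_Icc.mpr ⟨by omega, by omega⟩, ?_, ?_⟩
  · rwa [show ((n + 1 : ℕ) : ℤ) - 2 = n - 1 by push_cast; ring]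
  · rwa [← zpow_one_add₀ two_ne_zero, show 1 + (((n + 1 : ℕ) : ℤ) - 2) = n by push_cast; ring]

end

theorem embedding_lower_bound_general
    (V : Type*) [MetricSpace V] (r : ℕ) (hr : 1 ≤ r)
    (Ω : Type*) [MeasurableSpace Ω] (μ : Measure Ω) [IsProbabilityMeasure μ]
    (S : ℕ → Ω → Set V)
    (hmeas : ∀ i (v : V), MeasurableSet {ω | v ∈ S i ω})
    (hlow : ∀ u v : V, u ≠ v → 1 ≤ dist u v)
    (hhigh : ∀ u v : V, dist u v ≤ (2 : ℝ) ^ ((r : ℤ) - 2))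
    (hcut : ∀ i ∈ Finset.Icc 1 r, ∀ u v : V, dist u v > (2 : ℝ) ^ ((i : ℤ) - 2) →
      μ {ω | ¬ (u ∈ S i ω ↔ v ∈ S i ω)} ≥ 1/2)
    (u v : V) (huv : u ≠ v) :
    dist u v / 4 ≤
      ∫ ω, (Finset.Icc 1 r).sup' (Finset.nonempty_Icc.mpr hr)
        (fun i => |(if u ∈ S i ω then (2 : ℝ) ^ ((i : ℤ) - 2) else 0)
                 - (if v ∈ S i ω then (2 : ℝ) ^ ((i : ℤ) - 2) else 0)|) ∂μ := by
  obtain ⟨i, hi, hRd, hdR⟩ := exists_mem_Icc_zpow_lt_le (hlow u v huv) (hhigh u v)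
  change _ ≤ ∫ ω, charEmbeddingDist _ _ (S · ω) u v ∂μ
  have hμ : 1 / 2 ≤ μ.real {ω | ¬(u ∈ S i ω ↔ v ∈ S i ω)} := by
    simpa [measureReal_def] using ENNReal.toReal_mono (measure_ne_top _ _) (hcut i hi u v hRd)
  calc dist u v / 4 ≤ 2 ^ ((i : ℤ) - 2) * (1 / 2) := by linarith
    _ ≤ 2 ^ ((i : ℤ) - 2) * μ.real {ω | ¬(u ∈ S i ω ↔ v ∈ S i ω)} := by gcongr
    _ ≤ _ := mul_measureReal_le_integral_of_le (by positivity)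
        (fun _ => charEmbeddingDist_nonneg) (integrable_charEmbeddingDist μ hmeas _ u v)
        (fun _ hω => zpow_le_charEmbeddingDist_of_not_iff hi hω)

/-- Lower bound for the characteristic embedding: if each cut `S_i` (scale
`R_i = 2^(i-2)`, `i = 1, …, r`) separates every pair at distance `> R_i` with
probability at least 1/2, then for every pair `u ≠ v` of points (all pairwise
distances lying in `[1, 2^(r-2)]`), the expected ℓ∞ distance of the embedded
points is at least `d(u,v)/4`. -/
theorem embedding_lower_bound
    (V : Type*) [MetricSpace V] [Fintype V] (r : ℕ) (hr : 1 ≤ r)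
    (Ω : Type*) [MeasurableSpace Ω] (μ : Measure Ω) [IsProbabilityMeasure μ]
    (S : ℕ → Ω → Set V)
    (hmeas : ∀ i (v : V), MeasurableSet {ω | v ∈ S i ω})
    (hlow : ∀ u v : V, u ≠ v → 1 ≤ dist u v)
    (hhigh : ∀ u v : V, dist u v ≤ (2 : ℝ) ^ ((r : ℤ) - 2))
    (hcut : ∀ i ∈ Finset.Icc 1 r, ∀ u v : V, dist u v > (2 : ℝ) ^ ((i : ℤ) - 2) →
      μ {ω | ¬ (u ∈ S i ω ↔ v ∈ S i ω)} ≥ 1/2)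
    (u v : V) (huv : u ≠ v) :
    dist u v / 4 ≤
      ∫ ω, (Finset.Icc 1 r).sup' (Finset.nonempty_Icc.mpr hr)
        (fun i => |(if u ∈ S i ω then (2 : ℝ) ^ ((i : ℤ) - 2) else 0)
                 - (if v ∈ S i ω then (2 : ℝ) ^ ((i : ℤ) - 2) else 0)|) ∂μ :=
  embedding_lower_bound_general V r hr Ω μ S hmeas hlow hhigh hcut u v huv
end

section
/- Let S₁,…,S_r be random subsets of a finite metric space (V,d) with R_i = 2^{i-2}, ε_i = c·R_i/n (with 0 < c ≤ 1, n = |V| ≥ 2), such that for all u,v: P(cut_{u,v}(S_i)) ≤ (K·log²n / R_i)·d(u,v) for some constant K, P(cut_{u,v}(S_i)) = 0 whenever d(u,v) < ε_i, and P(cut_{u,v}(S_i)) ≤ 1 always. Then for every u,v with d(u,v) ≥ 1, E[∑_{i=1}^r |ρ(u)_i − ρ(v)_i|] ≤ C·log³(n)·d(u,v) for some constant C depending only on K and c. -/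
/-!
Scale `i` contributes `R_i · P(cut_{u,v}(S_i))` to the expectation. Scales with
`R_i ≤ d(u,v)` contribute at most `R_i` each, and these form a geometric series bounded by
`2 d(u,v)`. Scales with `R_i > d(u,v) · n / c` contribute nothing. The remaining scales satisfy
`d(u,v) < R_i ≤ d(u,v) · n / c`, so there are at most `log₂(n / c) + 1 = O(log n)` of them, each
contributing at most `K log²n · d(u,v)`.
-/

open MeasureTheory Finset
open scoped Classical

noncomputable def dyadicScale (i : ℕ) : ℝ := 2 ^ ((i : ℤ) - 2)

lemma dyadicScale_pos (i : ℕ) : 0 < dyadicScale i := zpow_pos two_pos _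

lemma dyadicScale_add (i k : ℕ) : dyadicScale (i + k) = 2 ^ k * dyadicScale i := by
  rw [dyadicScale, dyadicScale, ← zpow_natCast, ← zpow_add₀ two_ne_zero]
  push_cast
  ring_nf

lemma sum_dyadicScale_range_le (m : ℕ) :
    ∑ i ∈ range (m + 1), dyadicScale i ≤ 2 * dyadicScale m := by
  induction m with
  | zero => rw [zero_add, sum_range_one]; linarith [dyadicScale_pos 0]
  | succ m ih =>
    rw [sum_range_succ, dyadicScale_add m 1]
    linarith

lemma sum_dyadicScale_le_two_mul {A : Finset ℕ} {d : ℝ} (hd : 0 ≤ d)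
    (hA : ∀ i ∈ A, dyadicScale i ≤ d) : ∑ i ∈ A, dyadicScale i ≤ 2 * d := by
  rcases A.eq_empty_or_nonempty with rfl | hne
  · simpa using hd
  calc ∑ i ∈ A, dyadicScale i
      ≤ ∑ i ∈ range (A.max' hne + 1), dyadicScale i :=
        sum_le_sum_of_subset_of_nonneg
          (fun i hi => mem_range_succ_iff.mpr (A.le_max' i hi))
          (fun i _ _ => (dyadicScale_pos i).le)
    _ ≤ 2 * dyadicScale (A.max' hne) := sum_dyadicScale_range_le _
    _ ≤ 2 * d := by linarith [hA _ (A.max'_mem hne)]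

lemma card_le_logb_of_dyadicScale_mem_Ioc {B : Finset ℕ} {d t : ℝ} (hd : 0 < d) (ht : 1 ≤ t)
    (hB : ∀ i ∈ B, dyadicScale i ∈ Set.Ioc d (d * t)) : (#B : ℝ) ≤ Real.logb 2 t + 1 := by
  rcases B.eq_empty_or_nonempty with rfl | hne
  · rw [card_empty, Nat.cast_zero]; linarith [Real.logb_nonneg one_lt_two ht]
  set i₀ := B.min' hne
  have h_gap : ∀ j ∈ B, j - i₀ ≤ ⌊Real.logb 2 t⌋₊ := by
    intro j hj
    apply Nat.le_floor
    rw [Real.le_logb_iff_rpow_le one_lt_two (by linarith), Real.rpow_natCast]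
    have h_split : dyadicScale j = 2 ^ (j - i₀) * dyadicScale i₀ := by
      rw [← dyadicScale_add, Nat.add_sub_cancel' (B.min'_le j hj)]
    have hj_le := (hB j hj).2
    have hi₀_gt := (hB i₀ (B.min'_mem hne)).1
    rw [h_split] at hj_le
    by_contra! h_big
    nlinarith [dyadicScale_pos i₀]
  have h_sub : B ⊆ Icc i₀ (i₀ + ⌊Real.logb 2 t⌋₊) := fun j hj =>
    mem_Icc.mpr ⟨B.min'_le j hj, by have := h_gap j hj; omega⟩
  have h_card : #B ≤ ⌊Real.logb 2 t⌋₊ + 1 :=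
    (card_le_card h_sub).trans (by rw [Nat.card_Icc]; omega)
  calc (#B : ℝ) ≤ (⌊Real.logb 2 t⌋₊ : ℝ) + 1 := by exact_mod_cast h_card
    _ ≤ Real.logb 2 t + 1 := by
      gcongr; exact Nat.floor_le (Real.logb_nonneg one_lt_two ht)

lemma sum_le_of_le_dyadicScale {s : Finset ℕ} {T : ℕ → ℝ} {d t M : ℝ}
    (hd : 0 < d) (ht : 1 ≤ t) (hM : 0 ≤ M)
    (hT_scale : ∀ i ∈ s, T i ≤ dyadicScale i) (hT_M : ∀ i ∈ s, T i ≤ M)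
    (hT_zero : ∀ i ∈ s, d * t < dyadicScale i → T i = 0) :
    ∑ i ∈ s, T i ≤ 2 * d + (Real.logb 2 t + 1) * M := by
  set small := s.filter (fun i => dyadicScale i ≤ d)
  set middle := (s.filter (fun i => ¬ dyadicScale i ≤ d)).filter (fun i => dyadicScale i ≤ d * t)
  set large := (s.filter (fun i => ¬ dyadicScale i ≤ d)).filter (fun i => ¬ dyadicScale i ≤ d * t)
  have h_small : ∑ i ∈ small, T i ≤ 2 * d :=
    (sum_le_sum fun i hi => hT_scale i (mem_filter.mp hi).1).trans
      (sum_dyadicScale_le_two_mul hd.le fun i hi => (mem_filter.mp hi).2)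
  have h_middle : ∑ i ∈ middle, T i ≤ (Real.logb 2 t + 1) * M := by
    have h_card : (#middle : ℝ) ≤ Real.logb 2 t + 1 :=
      card_le_logb_of_dyadicScale_mem_Ioc hd ht fun i hi => by
        simp only [middle, mem_filter] at hi
        exact ⟨lt_of_not_ge hi.1.2, hi.2⟩
    calc ∑ i ∈ middle, T i ≤ #middle • M :=
          sum_le_card_nsmul _ _ _ fun i hi => hT_M i (mem_filter.mp (mem_filter.mp hi).1).1
      _ ≤ (Real.logb 2 t + 1) * M := by rw [nsmul_eq_mul]; gcongr
  have h_large : ∑ i ∈ large, T i = 0 := sum_eq_zero fun i hi => by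
    simp only [large, mem_filter] at hi
    exact hT_zero i hi.1.1 (lt_of_not_ge hi.2)
  rw [← sum_filter_add_sum_filter_not s (fun i => dyadicScale i ≤ d),
    ← sum_filter_add_sum_filter_not (s.filter fun i => ¬ dyadicScale i ≤ d)
      (fun i => dyadicScale i ≤ d * t)]
  linarith

lemma integral_abs_ite_sub_ite {Ω : Type*} [MeasurableSpace Ω] (μ : Measure Ω) {p q : Ω → Prop}
    (hp : MeasurableSet {ω | p ω}) (hq : MeasurableSet {ω | q ω}) {R : ℝ} (hR : 0 ≤ R) :
    ∫ ω, |(if p ω then R else 0) - (if q ω then R else 0)| ∂μ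
      = μ.real {ω | ¬ (p ω ↔ q ω)} * R := by
  have h_cut : {ω | ¬ (p ω ↔ q ω)} = symmDiff {ω | p ω} {ω | q ω} := by
    ext ω; simp only [Set.mem_ofPred_eq, Set.mem_symmDiff]; tauto
  have h_eq : (fun ω => |(if p ω then R else 0) - (if q ω then R else 0)|)
      = {ω | ¬ (p ω ↔ q ω)}.indicator (fun _ => R) := by
    funext ω
    by_cases hpω : p ω <;> by_cases hqω : q ω <;> simp [hpω, hqω, abs_of_nonneg hR]
  rw [h_eq, integral_indicator_const _ (h_cut ▸ hp.symmDiff hq), smul_eq_mul]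

lemma add_logb_mul_le_mul_pow_three {K c L d : ℝ} (hK : 0 ≤ K) (hc : 0 < c) (hc1 : c ≤ 1)
    (hL : 1 ≤ L) (hd : 0 ≤ d) :
    2 * d + (L - Real.logb 2 c + 1) * (K * L ^ 2 * d)
      ≤ (2 + (2 - Real.logb 2 c) * K) * L ^ 3 * d := by
  have hlogc : Real.logb 2 c ≤ 0 := Real.logb_nonpos one_lt_two hc.le hc1
  have hL3 : 1 ≤ L ^ 3 := one_le_pow₀ hL
  have h_factor : L - Real.logb 2 c + 1 ≤ (2 - Real.logb 2 c) * L := by nlinarith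
  have hKL : 0 ≤ K * L ^ 2 * d := by positivity
  nlinarith [mul_le_mul_of_nonneg_right h_factor hKL]

/-- Upper bound for the characteristic embedding: if each cut `S_i` (scale
`R_i = 2^(i-2)`, `ε_i = c·R_i/n`) separates pairs with probability at most
`K·log²n/R_i · d(u,v)` and never separates pairs at distance `< ε_i`, then the
expected ℓ₁ distance of the embedded points is at most `C·log³n · d(u,v)` for a
constant `C` depending only on `K` and `c`. -/
theorem embedding_upper_bound (K c : ℝ) (hK : 0 < K) (hc : 0 < c) (hc1 : c ≤ 1) :
    ∃ C : ℝ, 0 < C ∧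
      ∀ (V : Type) (_ : MetricSpace V) (_ : Fintype V) (n r : ℕ),
        n = Fintype.card V → 2 ≤ n →
        (∀ u v : V, u ≠ v → 1 ≤ dist u v) →
        ∀ (Ω : Type) (_ : MeasurableSpace Ω) (μ : Measure Ω),
          IsProbabilityMeasure μ →
          ∀ (S : ℕ → Ω → Set V),
            (∀ i (v : V), MeasurableSet {ω | v ∈ S i ω}) →
            (∀ i ∈ Finset.Icc 1 r, ∀ u v : V,
              μ {ω | ¬ (u ∈ S i ω ↔ v ∈ S i ω)}
                ≤ ENNReal.ofReal (K * (Real.logb 2 n) ^ 2 / (2 : ℝ) ^ ((i : ℤ) - 2)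
                    * dist u v)) →
            (∀ i ∈ Finset.Icc 1 r, ∀ u v : V,
              dist u v < c * (2 : ℝ) ^ ((i : ℤ) - 2) / n →
              μ {ω | ¬ (u ∈ S i ω ↔ v ∈ S i ω)} = 0) →
            ∀ u v : V, 1 ≤ dist u v →
              ∑ i ∈ Finset.Icc 1 r,
                ∫ ω, |(if u ∈ S i ω then (2 : ℝ) ^ ((i : ℤ) - 2) else 0)
                    - (if v ∈ S i ω then (2 : ℝ) ^ ((i : ℤ) - 2) else 0)| ∂μ
                ≤ C * (Real.logb 2 n) ^ 3 * dist u v := by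
  refine ⟨2 + (2 - Real.logb 2 c) * K, ?_, ?_⟩
  · nlinarith [Real.logb_nonpos one_lt_two hc.le hc1]
  intro V _ _ n r _ hn2 _ Ω _ μ _ S hS h_cut_le h_cut_zero u v huv
  set d := dist u v
  set L := Real.logb 2 n
  have hn_pos : (0 : ℝ) < n := by positivity
  have hn_two : (2 : ℝ) ≤ n := by exact_mod_cast hn2
  have hL : 1 ≤ L := by
    rwa [Real.le_logb_iff_rpow_le one_lt_two hn_pos, Real.rpow_one]
  refine (sum_congr rfl fun i _ =>
    integral_abs_ite_sub_ite μ (hS i u) (hS i v) (dyadicScale_pos i).le).trans_le ?_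
  calc _ ≤ 2 * d + (Real.logb 2 (n / c) + 1) * (K * L ^ 2 * d) := by
        refine sum_le_of_le_dyadicScale (by linarith) ?_ (by positivity) ?_ ?_ ?_
        · rw [le_div_iff₀ hc]; linarith
        · exact fun i _ => mul_le_of_le_one_left (dyadicScale_pos i).le measureReal_le_one
        · intro i hi
          have h_prob := ENNReal.toReal_le_of_le_ofReal (by positivity) (h_cut_le i hi u v)
          calc _ ≤ K * L ^ 2 / dyadicScale i * d * dyadicScale i :=
                mul_le_mul_of_nonneg_right h_prob (dyadicScale_pos i).le
            _ = K * L ^ 2 * d := by field_simp [(dyadicScale_pos i).ne']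
        · intro i hi h_far
          have h_close : d < c * dyadicScale i / n := by
            rw [lt_div_iff₀ hn_pos]; rw [mul_div_assoc', div_lt_iff₀ hc] at h_far; linarith
          simp [Measure.real, h_cut_zero i hi u v h_close]
    _ ≤ _ := by
        rw [Real.logb_div hn_pos.ne' hc.ne']
        exact add_logb_mul_le_mul_pow_three hK.le hc hc1 hL (by linarith)
end
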